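/- For a nonempty subset T ⊆ {0, 1, …, n−1}, let g_T = lclm(x − θ^i(β) : i ∈ T) ∈ S, and let T̄ ⊆ Z/nZ be the smallest union of cosets of the subgroup C_s = {0, μ, …, (s−1)μ} of Z/nZ that contains T. Then g_{T̄} = \overline{g_T}, the monic generator of the left ideal S·g_T ∩ R of R; in particular g_{T̄} has all its coefficients in L. -/

import Mathlib

/-! Skew polynomials over a field `M` twisted by a ring automorphism `θ` (`x·a = θ(a)·x`),
modeled as finitely supported functions `ℕ →₀ M` (coefficient of `xⁱ` at `i`),
with left-coefficient multiplication `(Σᵢ aᵢ xⁱ)·(Σⱼ bⱼ xʲ) = Σᵢⱼ aᵢ θⁱ(bⱼ) x^{i+j}`. -/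

variable {M : Type*} [Field M]

/-- Multiplication of skew polynomials: `f * g` in `M[x;θ]`. -/
noncomputable def sMul (θ : M ≃+* M) (f g : ℕ →₀ M) : ℕ →₀ M :=
  f.sum fun i a => g.sum fun j b => Finsupp.single (i + j) (a * (θ ^ i) b)

/-- The skew polynomial `x - γ`. -/
noncomputable def Xsub (γ : M) : ℕ →₀ M := Finsupp.single 1 1 - Finsupp.single 0 γ

/-- The skew polynomial `xⁿ - 1`. -/
noncomputable def XnSubOne (n : ℕ) : ℕ →₀ M := Finsupp.single n 1 - Finsupp.single 0 1

/-- The left ideal `S·f = {q·f : q ∈ S}` of `S = M[x;θ]`. -/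
def lIdeal (θ : M ≃+* M) (f : ℕ →₀ M) : Set (ℕ →₀ M) := {h | ∃ q, h = sMul θ q f}

/-- `g` right-divides `f` in `M[x;θ]`, i.e. `f ∈ S·g`. -/
def rdvd (θ : M ≃+* M) (g f : ℕ →₀ M) : Prop := f ∈ lIdeal θ g

/-- The fixed subfield of an automorphism. -/
noncomputable def fixedSubfield (φ : M ≃+* M) : Subfield M where
  carrier := {a | φ a = a}
  zero_mem' := map_zero φ
  one_mem' := map_one φ
  add_mem' := by intro a b ha hb; simp only [Set.mem_setOf_eq, map_add] at *; rw [ha, hb]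
  mul_mem' := by intro a b ha hb; simp only [Set.mem_setOf_eq, map_mul] at *; rw [ha, hb]
  neg_mem' := by intro a ha; simp only [Set.mem_setOf_eq, map_neg] at *; rw [ha]
  inv_mem' := by intro a ha; simp only [Set.mem_setOf_eq, map_inv₀] at *; rw [ha]

/-- A skew polynomial lies in the subring `R` of polynomials whose coefficients are fixed
by the automorphism `φ` (for `φ = θ^μ = π`, this is `R = L[x;σ]` with `L = M^π`). -/
def inR (φ : M ≃+* M) (f : ℕ →₀ M) : Prop := ∀ j, φ (f j) = f j

/-- The polynomial of degree `< n` with coefficient vector `c`. -/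
noncomputable def vecPoly {n : ℕ} (c : Fin n → M) : ℕ →₀ M :=
  ∑ j : Fin n, Finsupp.single (j : ℕ) (c j)

/-- Hamming weight of a vector. -/
noncomputable def hWt {n : ℕ} (c : Fin n → M) : ℕ := Set.ncard {j : Fin n | c j ≠ 0}

/-- `α` generates a normal basis `{α, θ(α), …, θ^{n-1}(α)}` of `M` over `K = M^θ`. -/
def NormalBasis (θ : M ≃+* M) (n : ℕ) (α : M) : Prop :=
  LinearIndependent (fixedSubfield θ) (fun i : Fin n => (θ ^ (i : ℕ)) α) ∧
    Submodule.span (fixedSubfield θ) (Set.range fun i : Fin n => (θ ^ (i : ℕ)) α) = ⊤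

/-- `f` is monic of degree `d`. -/
def IsMonicAt (f : ℕ →₀ M) (d : ℕ) : Prop := f d = 1 ∧ ∀ j, d < j → f j = 0

/-- `f` is monic. -/
def IsMonic (f : ℕ →₀ M) : Prop := ∃ d, IsMonicAt f d

/-- Coefficientwise application of an automorphism to a skew polynomial (`f ↦ f^φ`). -/
noncomputable def pmap (φ : M ≃+* M) (f : ℕ →₀ M) : ℕ →₀ M :=
  Finsupp.mapRange φ (map_zero φ) f

/-! The automorphism `π = θ ^ μ` commutes with `θ`, so applying it to coefficients is a ring
automorphism of `M[x;θ]`; it fixes `R` pointwise and sends the factor `x - θᵏ(β)` to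
`x - θᵏ⁺ᵘ(β)`. Since `T̄` is stable under `k ↦ k + μ`, the ideal `S·g_{T̄}` is `π`-stable, so its
monic generator is `π`-fixed, i.e. lies in `R`; being a right multiple of `g_T`, it lies in
`R·ḡ_T`. Conversely `ḡ_T` is `π`-fixed and right divisible by `x - θⁱ(β)` for `i ∈ T`, hence by
all their `π`-translates, i.e. by `g_{T̄}`. Two monic skew polynomials dividing each other are
equal. -/

open Finset

section SkewMul

variable (θ : M ≃+* M)

lemma sMul_apply (q g : ℕ →₀ M) (k : ℕ) :
    sMul θ q g k = ∑ i ∈ q.support, ∑ j ∈ g.support,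
      if i + j = k then q i * (θ ^ i) (g j) else 0 := by
  simp only [sMul, Finsupp.sum, Finsupp.finsetSum_apply, Finsupp.single_apply]

lemma zero_sMul (g : ℕ →₀ M) : sMul θ 0 g = 0 :=
  Finsupp.sum_zero_index

lemma single_zero_one_sMul (g : ℕ →₀ M) : sMul θ (Finsupp.single 0 1) g = g := by
  rw [sMul, Finsupp.sum_single_index (by simp)]
  simp only [zero_add, pow_zero, RingAut.one_apply, one_mul]
  exact Finsupp.sum_single g

lemma mem_lIdeal_self (f : ℕ →₀ M) : f ∈ lIdeal θ f :=
  ⟨Finsupp.single 0 1, (single_zero_one_sMul θ f).symm⟩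

variable {θ}

lemma sMul_apply_eq_zero_of_lt {q g : ℕ →₀ M} {m e k : ℕ}
    (hq : ∀ i, m < i → q i = 0) (hg : ∀ j, e < j → g j = 0) (hk : m + e < k) :
    sMul θ q g k = 0 := by
  rw [sMul_apply]
  refine sum_eq_zero fun i hi => sum_eq_zero fun j hj => if_neg fun hij => ?_
  have hi : i ≤ m := not_lt.mp (mt (hq i) (Finsupp.mem_support_iff.mp hi))
  have hj : j ≤ e := not_lt.mp (mt (hg j) (Finsupp.mem_support_iff.mp hj))
  omega

lemma sMul_apply_add_of_isMonicAt {q g : ℕ →₀ M} {m e : ℕ}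
    (hq : ∀ i, m < i → q i = 0) (hg : IsMonicAt g e) :
    sMul θ q g (m + e) = q m := by
  rw [sMul_apply, sum_eq_single m, sum_eq_single e]
  · simp [hg.1]
  · exact fun j _ hj => if_neg (by omega)
  · intro he
    simp [Finsupp.notMem_support_iff.mp he]
  · intro i hi him
    have hi : i ≤ m := not_lt.mp (mt (hq i) (Finsupp.mem_support_iff.mp hi))
    refine sum_eq_zero fun j hj => if_neg fun hij => ?_
    have hj : j ≤ e := not_lt.mp (mt (hg.2 j) (Finsupp.mem_support_iff.mp hj))
    omega
  · intro hm
    simp [Finsupp.notMem_support_iff.mp hm]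

lemma Finsupp.exists_ne_zero_forall_lt_eq_zero {q : ℕ →₀ M} (hq : q ≠ 0) :
    ∃ m, q m ≠ 0 ∧ ∀ i, m < i → q i = 0 := by
  have hne := Finsupp.support_nonempty_iff.mpr hq
  exact ⟨q.support.max' hne, Finsupp.mem_support_iff.mp (max'_mem _ hne),
    fun i hi => Finsupp.notMem_support_iff.mp fun h => (le_max' _ i h).not_gt hi⟩

lemma IsMonicAt.of_sMul {q g : ℕ →₀ M} {d e : ℕ} (hg : IsMonicAt g e)
    (hqg : IsMonicAt (sMul θ q g) d) : e ≤ d ∧ IsMonicAt q (d - e) := by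
  have hq : q ≠ 0 := by
    rintro rfl
    simpa [zero_sMul] using hqg.1
  obtain ⟨m, hm, hmax⟩ := Finsupp.exists_ne_zero_forall_lt_eq_zero hq
  have htop := sMul_apply_add_of_isMonicAt (θ := θ) hmax hg
  have hle : m + e ≤ d := not_lt.mp fun h => hm (htop ▸ hqg.2 _ h)
  have hge : d ≤ m + e := not_lt.mp fun h =>
    one_ne_zero (hqg.1 ▸ sMul_apply_eq_zero_of_lt hmax hg.2 h)
  obtain rfl : d = m + e := le_antisymm hge hle
  rw [Nat.add_sub_cancel]
  exact ⟨le_add_self, htop ▸ hqg.1, hmax⟩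

lemma IsMonicAt.eq_single_zero_one {q : ℕ →₀ M} (hq : IsMonicAt q 0) :
    q = Finsupp.single 0 1 := by
  ext (_ | j)
  · simp [hq.1]
  · simp [hq.2 _ j.succ_pos]

lemma IsMonic.eq_of_mem_lIdeal {f g : ℕ →₀ M} (hf : IsMonic f) (hg : IsMonic g)
    (hfg : f ∈ lIdeal θ g) (hgf : g ∈ lIdeal θ f) : f = g := by
  obtain ⟨d, hd⟩ := hf
  obtain ⟨e, he⟩ := hg
  obtain ⟨q, rfl⟩ := hfg
  obtain ⟨r, hr⟩ := hgf
  obtain ⟨hed, hq⟩ := he.of_sMul hd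
  obtain ⟨hde, -⟩ := hd.of_sMul (hr ▸ he)
  rw [show d - e = 0 by omega] at hq
  rw [hq.eq_single_zero_one, single_zero_one_sMul]

end SkewMul

section CoeffMap

variable (φ : M ≃+* M)

lemma pmap_apply (f : ℕ →₀ M) (j : ℕ) : pmap φ f j = φ (f j) :=
  Finsupp.mapRange_apply

lemma pmap_bijective : Function.Bijective (pmap (M := M) φ) :=
  (Finsupp.mapRange.addEquiv (φ : M ≃+ M)).bijective

lemma pmap_Xsub (γ : M) : pmap φ (Xsub γ) = Xsub (φ γ) := by
  ext k
  simp [pmap_apply, Xsub, Finsupp.single_apply, apply_ite φ]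

lemma IsMonic.pmap {f : ℕ →₀ M} (hf : IsMonic f) : IsMonic (pmap φ f) := by
  obtain ⟨d, hd1, hd2⟩ := hf
  exact ⟨d, by rw [pmap_apply, hd1, map_one], fun j hj => by rw [pmap_apply, hd2 j hj, map_zero]⟩

variable {φ} {θ : M ≃+* M}

lemma pmap_sMul (hc : Commute φ θ) (q g : ℕ →₀ M) :
    pmap φ (sMul θ q g) = sMul θ (pmap φ q) (pmap φ g) := by
  have hsupp (f : ℕ →₀ M) : (pmap φ f).support = f.support :=
    Finsupp.support_mapRange_of_injective (map_zero φ) f φ.injective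
  ext k
  simp only [pmap_apply, sMul_apply, hsupp, map_sum, apply_ite φ, map_zero, map_mul]
  congr! 4 with i - j -
  exact DFunLike.congr_fun (hc.pow_right i).eq (g j)

lemma lIdeal_pmap (hc : Commute φ θ) (f : ℕ →₀ M) :
    lIdeal θ (pmap φ f) = pmap φ '' lIdeal θ f := by
  ext h
  constructor
  · rintro ⟨q, rfl⟩
    obtain ⟨q', rfl⟩ := (pmap_bijective φ).2 q
    exact ⟨sMul θ q' f, ⟨q', rfl⟩, pmap_sMul hc q' f⟩
  · rintro ⟨_, ⟨q, rfl⟩, rfl⟩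
    exact ⟨pmap φ q, pmap_sMul hc q f⟩

lemma image_pmap_biInter_lIdeal_Xsub (hc : Commute φ θ) [DecidableEq M] (B : Finset M) :
    pmap φ '' ⋂ γ ∈ B, lIdeal θ (Xsub γ) = ⋂ γ ∈ B.image φ, lIdeal θ (Xsub γ) := by
  rw [Set.image_iInter₂ (pmap_bijective φ), set_biInter_finset_image]
  simp only [← lIdeal_pmap hc, pmap_Xsub]

lemma mem_lIdeal_Xsub_apply_of_inR (hc : Commute φ θ) {h : ℕ →₀ M} (hh : inR φ h) {γ : M}
    (hγ : h ∈ lIdeal θ (Xsub γ)) : h ∈ lIdeal θ (Xsub (φ γ)) := by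
  have hfix : pmap φ h = h := Finsupp.ext fun j => (pmap_apply φ h j).trans (hh j)
  rw [← hfix, ← pmap_Xsub, lIdeal_pmap hc]
  exact Set.mem_image_of_mem _ hγ

lemma inR_of_lIdeal_eq_biInter_Xsub (hc : Commute φ θ) [DecidableEq M] {g : ℕ →₀ M}
    (hg : IsMonic g) {B : Finset M} (hgB : lIdeal θ g = ⋂ γ ∈ B, lIdeal θ (Xsub γ))
    (hB : B.image φ ⊆ B) : inR φ g := by
  have hBφ : B.image φ = B := eq_of_subset_of_card_le hB (card_image_of_injective _ φ.injective).ge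
  have hideal : lIdeal θ (pmap φ g) = lIdeal θ g := by
    rw [lIdeal_pmap hc, hgB, image_pmap_biInter_lIdeal_Xsub hc, hBφ]
  have hfix : pmap φ g = g := (hg.pmap φ).eq_of_mem_lIdeal hg
    (hideal ▸ mem_lIdeal_self θ _) (hideal ▸ mem_lIdeal_self θ _)
  exact fun j => (pmap_apply φ g j).symm.trans (congrArg (· j) hfix)

end CoeffMap

section CosetClosure

/-- The paper's `T̄`. -/
def cosetClosure (T : Finset ℕ) (μ s n : ℕ) : Finset ℕ :=
  (T ×ˢ range s).image fun p => (p.1 + p.2 * μ) % n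

variable {T : Finset ℕ} {μ s n : ℕ}

lemma subset_cosetClosure (hs : 0 < s) (hT : ∀ i ∈ T, i < n) : T ⊆ cosetClosure T μ s n :=
  fun i hi => mem_image.mpr
    ⟨(i, 0), mem_product.mpr ⟨hi, mem_range.mpr hs⟩, by simp [Nat.mod_eq_of_lt (hT i hi)]⟩

lemma add_mod_mem_cosetClosure (hn : n = μ * s) {k : ℕ} (hk : k ∈ cosetClosure T μ s n) :
    (k + μ) % n ∈ cosetClosure T μ s n := by
  obtain ⟨⟨i, m⟩, him, rfl⟩ := mem_image.mp hk
  rw [mem_product, mem_range] at him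
  refine mem_image.mpr ⟨(i, (m + 1) % s),
    mem_product.mpr ⟨him.1, mem_range.mpr (Nat.mod_lt _ (by omega))⟩, ?_⟩
  -- `((m + 1) % s) μ ≡ (m + 1) μ (mod sμ)`
  rw [← Nat.mul_mod_mul_right, mul_comm s, ← hn, Nat.add_mod_mod, Nat.mod_add_mod]
  ring_nf

lemma cosetClosure_subset_of_add_mod_mem (hT : ∀ i ∈ T, i < n) {U : Set ℕ} (hTU : ∀ i ∈ T, i ∈ U)
    (hU : ∀ k ∈ U, (k + μ) % n ∈ U) : ∀ k ∈ cosetClosure T μ s n, k ∈ U := by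
  rintro _ hk
  obtain ⟨⟨i, m⟩, him, rfl⟩ := mem_image.mp hk
  have hi : i ∈ T := (mem_product.mp him).1
  dsimp only
  clear hk him
  induction m with
  | zero => simpa [Nat.mod_eq_of_lt (hT i hi)] using hTU i hi
  | succ m ih =>
    have hmod : (i + (m + 1) * μ) % n = ((i + m * μ) % n + μ) % n := by
      rw [Nat.mod_add_mod]; ring_nf
    exact hmod ▸ hU _ ih

end CosetClosure

theorem lclm_closure_eq_contraction_general {M : Type*} [Field M] (θ : M ≃+* M) (μ s n : ℕ)
    (hs : 0 < s) (hn : n = μ * s) (hord : orderOf θ = n)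
    (β : M)
    (T : Finset ℕ) (hTn : ∀ i ∈ T, i < n)
    (gT : ℕ →₀ M)
    (hgTgen : lIdeal θ gT = ⋂ i ∈ T, lIdeal θ (Xsub ((θ ^ i) β)))
    (gbar : ℕ →₀ M) (hgbarM : IsMonic gbar)
    (hgbargen : {h | ∃ q, inR (θ ^ μ) q ∧ h = sMul θ q gbar}
      = lIdeal θ gT ∩ {h | inR (θ ^ μ) h})
    (gTbar : ℕ →₀ M) (hgTbarM : IsMonic gTbar)
    (hgTbargen : lIdeal θ gTbar
      = ⋂ i ∈ Finset.image (fun p : ℕ × ℕ => (p.1 + p.2 * μ) % n) (T ×ˢ Finset.range s),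
          lIdeal θ (Xsub ((θ ^ i) β))) :
    gTbar = gbar ∧ inR (θ ^ μ) gTbar := by
  classical
  have hcomm : Commute (θ ^ μ) θ := (Commute.refl θ).pow_left μ
  have hshift (k : ℕ) : (θ ^ μ) ((θ ^ k) β) = (θ ^ ((k + μ) % n)) β := by
    rw [← hord, pow_mod_orderOf, add_comm, pow_add, RingAut.mul_apply]
  have hgTbarR : inR (θ ^ μ) gTbar := by
    refine inR_of_lIdeal_eq_biInter_Xsub hcomm hgTbarM
      (B := (cosetClosure T μ s n).image fun k => (θ ^ k) β)
      (by simp only [hgTbargen, cosetClosure, set_biInter_finset_image]) fun γ hγ => ?_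
    obtain ⟨_, hroot, rfl⟩ := mem_image.mp hγ
    obtain ⟨k, hk, rfl⟩ := mem_image.mp hroot
    exact mem_image.mpr ⟨_, add_mod_mem_cosetClosure hn hk, (hshift k).symm⟩
  have hgTbar_mem : gTbar ∈ lIdeal θ gT := by
    rw [hgTgen]
    exact Set.biInter_subset_biInter_left (subset_cosetClosure hs hTn)
      (hgTbargen ▸ mem_lIdeal_self θ gTbar)
  obtain ⟨hgbar_mem, hgbarR⟩ : gbar ∈ lIdeal θ gT ∩ {h | inR (θ ^ μ) h} :=
    hgbargen ▸ ⟨Finsupp.single 0 1, fun j => by simp [Finsupp.single_apply, apply_ite],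
      (single_zero_one_sMul θ gbar).symm⟩
  have hgbar_mem_gTbar : gbar ∈ lIdeal θ gTbar := by
    rw [hgTbargen]
    refine Set.mem_iInter₂.mpr (cosetClosure_subset_of_add_mod_mem hTn
      (U := {k | gbar ∈ lIdeal θ (Xsub ((θ ^ k) β))}) (fun i hi => ?_) fun k hk => ?_)
    · exact Set.mem_iInter₂.mp (hgTgen ▸ hgbar_mem) i hi
    · have := mem_lIdeal_Xsub_apply_of_inR hcomm hgbarR hk
      rwa [hshift] at this
  obtain ⟨q, -, hq⟩ : gTbar ∈ {h | ∃ q, inR (θ ^ μ) q ∧ h = sMul θ q gbar} :=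
    hgbargen ▸ ⟨hgTbar_mem, hgTbarR⟩
  exact ⟨hgTbarM.eq_of_mem_lIdeal hgbarM ⟨q, hq⟩ hgbar_mem_gTbar, hgTbarR⟩

/-- Setting: `θ` of order `n = μ·s`, `π = θ^μ`, `R = L[x;σ]` the fixed ring of
the coefficientwise action of `π` on `S = M[x;θ]`, `α` generating a normal basis of `M/K` and
`β = α⁻¹θ(α)`. For a nonempty `T ⊆ {0, …, n-1}`, let `g_T = lclm(x - θⁱ(β) : i ∈ T)` (the monic
generator of `⋂_{i∈T} S·(x - θⁱ(β))`), let `T̄` be the smallest union of cosets of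
`C_s = {0, μ, …, (s-1)μ} ≤ ℤ/nℤ` containing `T` (namely `{(i + mμ) mod n : i ∈ T, m}`), let
`g_{T̄}` be the corresponding monic lclm, and let `ḡ_T` be the monic generator of the left
ideal `S·g_T ∩ R` of `R`. Then `g_{T̄} = ḡ_T`; in particular `g_{T̄}` has all its
coefficients in `L`. -/
theorem lclm_closure_eq_contraction {M : Type*} [Field M] (θ : M ≃+* M) (μ s n : ℕ)
    (hμ : 0 < μ) (hs : 0 < s) (hn : n = μ * s) (hord : orderOf θ = n)
    (α : M) (hα : NormalBasis θ n α) (β : M) (hβ : β = α⁻¹ * θ α)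
    (T : Finset ℕ) (hTne : T.Nonempty) (hTn : ∀ i ∈ T, i < n)
    (gT : ℕ →₀ M) (hgTM : IsMonic gT)
    (hgTgen : lIdeal θ gT = ⋂ i ∈ T, lIdeal θ (Xsub ((θ ^ i) β)))
    (gbar : ℕ →₀ M) (hgbarR : inR (θ ^ μ) gbar) (hgbarM : IsMonic gbar)
    (hgbargen : {h | ∃ q, inR (θ ^ μ) q ∧ h = sMul θ q gbar}
      = lIdeal θ gT ∩ {h | inR (θ ^ μ) h})
    (gTbar : ℕ →₀ M) (hgTbarM : IsMonic gTbar)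
    (hgTbargen : lIdeal θ gTbar
      = ⋂ i ∈ Finset.image (fun p : ℕ × ℕ => (p.1 + p.2 * μ) % n) (T ×ˢ Finset.range s),
          lIdeal θ (Xsub ((θ ^ i) β))) :
    gTbar = gbar ∧ inR (θ ^ μ) gTbar :=
  lclm_closure_eq_contraction_general θ μ s n hs hn hord β T hTn gT hgTgen gbar hgbarM hgbargen
    gTbar hgTbarM hgTbargen
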